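/- Let A = (Q, δ, q₀, F) be a deterministic automaton over a finite alphabet Σ, and define the product automaton A⊺A with state type Q × Q, transition function mapping ((a, b), σ) to (δ a σ, δ b σ), and set of final product states D = {(a, b) | (a ∈ F) ≠ (b ∈ F)}. Then for all states p, q ∈ Q the following are equivalent: (1) p and q are almost equivalent; (2) for every infinite word α : ℕ → Σ, the run of A⊺A on α starting at (p, q) visits D only finitely often; (3) no product state in D that lies on a cycle of A⊺A is reachable in A⊺A from (p, q). -/

import Mathlib

/-- The run of the deterministic automaton `M` from state `q` on the infinite
word `x`. -/
def DFA.runFrom {α σ : Type*} (M : DFA α σ) (q : σ) (x : ℕ → α) : ℕ → σ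
  | 0 => q
  | n + 1 => M.step (M.runFrom q x n) (x n)

/-- State `p` of `M₁` and state `q` of `M₂` are almost equivalent: for every
infinite word, the runs from `p` and from `q` disagree on membership in the
accepting sets only at finitely many positions. -/
def AlmostEquiv {α σ₁ σ₂ : Type*} (M₁ : DFA α σ₁) (M₂ : DFA α σ₂)
    (p : σ₁) (q : σ₂) : Prop :=
  ∀ x : ℕ → α,
    {n : ℕ | (M₁.runFrom p x n ∈ M₁.accept) ≠ (M₂.runFrom q x n ∈ M₂.accept)}.Finite

/-- The product automaton `A⊺A` of `M` with itself, started at `(p, q)`, whose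
final (product) states are the pairs on which the accepting status differs. -/
def prodAut {α σ : Type*} (M : DFA α σ) (p q : σ) : DFA α (σ × σ) where
  step := fun s a => (M.step s.1 a, M.step s.2 a)
  start := (p, q)
  accept := {s | (s.1 ∈ M.accept) ≠ (s.2 ∈ M.accept)}

/-!
A run of the product automaton visits `D` exactly when the two runs of `A` disagree on
acceptance, which gives (1) ⇔ (2). For (2) ⇔ (3): if some run visits `D` infinitely often,
then by pigeonhole it visits one state of `D` twice, so that state is reachable and lies on a
cycle; conversely, a reachable state on a cycle is visited infinitely often by the run on the
lasso word `u v^ω`, where `u` reaches it and `v` is the cycle.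
-/

namespace DFA

variable {α σ : Type*} (M : DFA α σ)

theorem runFrom_eq_evalFrom (q : σ) (x : Stream' α) (n : ℕ) :
    M.runFrom q x n = M.evalFrom q (Stream'.take n x) := by
  induction n with
  | zero => rfl
  | succ n ih => rw [Stream'.take_succ', evalFrom_append_singleton, ← ih]; rfl

theorem runFrom_add (q : σ) (x : Stream' α) (n m : ℕ) :
    M.runFrom q x (n + m) = M.runFrom (M.runFrom q x n) (Stream'.drop n x) m := by
  rw [runFrom_eq_evalFrom, Stream'.take_add, evalFrom_of_append, ← runFrom_eq_evalFrom,
    ← runFrom_eq_evalFrom]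

theorem runFrom_append_stream (q : σ) (u : List α) (y : Stream' α) (n : ℕ) :
    M.runFrom q (u ++ₛ y) (u.length + n) = M.runFrom (M.evalFrom q u) y n := by
  have htake : Stream'.take u.length (u ++ₛ y) = u := by
    simpa using (Stream'.append_take 0 u y).symm
  rw [runFrom_add, Stream'.drop_append_stream, runFrom_eq_evalFrom M q (u ++ₛ y), htake]

theorem runFrom_cycle_mul_length {s : σ} {v : List α} (hv : M.evalFrom s v = s) (hne : v ≠ [])
    (k : ℕ) : M.runFrom s (Stream'.cycle v hne) (k * v.length) = s := by
  induction k with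
  | zero => rw [Nat.zero_mul]; rfl
  | succ k ih =>
    rw [Nat.succ_mul, Nat.add_comm, Stream'.cycle_eq, runFrom_append_stream, hv, ih]

theorem infinite_runFrom_lasso_eq {q s : σ} {u v : List α} (hu : M.evalFrom q u = s)
    (hv : M.evalFrom s v = s) (hne : v ≠ []) :
    {n | M.runFrom q (u ++ₛ Stream'.cycle v hne) n = s}.Infinite := by
  have hlen : 0 < v.length := List.length_pos_iff.mpr hne
  have hinj : Function.Injective fun k => u.length + k * v.length := fun a b hab =>
    Nat.eq_of_mul_eq_mul_right hlen (Nat.add_left_cancel hab)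
  refine (Set.infinite_range_of_injective hinj).mono ?_
  rintro _ ⟨k, rfl⟩
  rw [Set.mem_ofPred_eq, runFrom_append_stream, hu, runFrom_cycle_mul_length M hv]

theorem exists_reachable_cycle_of_infinite_runFrom_mem [Finite σ] {q : σ} {x : Stream' α}
    {S : Set σ} (h : {n | M.runFrom q x n ∈ S}.Infinite) :
    ∃ s ∈ S, (∃ w : List α, M.evalFrom q w = s) ∧ ∃ w : List α, w ≠ [] ∧ M.evalFrom s w = s := by
  obtain ⟨n, hn, m, hm, hne, heq⟩ :=
    h.exists_ne_map_eq_of_mapsTo (Set.mapsTo_univ (M.runFrom q x) _) Set.finite_univ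
  wlog hlt : n < m generalizing n m
  · exact this m hm n hn hne.symm heq.symm (by omega)
  refine ⟨M.runFrom q x n, hn, ⟨_, (runFrom_eq_evalFrom M q x n).symm⟩,
    Stream'.take (m - n) (Stream'.drop n x), ?_, ?_⟩
  · rw [← List.length_pos_iff, Stream'.length_take]
    omega
  · rw [← runFrom_eq_evalFrom, ← runFrom_add, Nat.add_sub_cancel' hlt.le, heq]

theorem forall_finite_runFrom_mem_iff [Finite σ] (q : σ) (S : Set σ) :
    (∀ x : ℕ → α, {n | M.runFrom q x n ∈ S}.Finite) ↔
      ¬ ∃ s ∈ S, (∃ w : List α, M.evalFrom q w = s) ∧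
        ∃ w : List α, w ≠ [] ∧ M.evalFrom s w = s := by
  constructor
  · rintro hfin ⟨s, hs, ⟨u, hu⟩, v, hne, hv⟩
    refine (M.infinite_runFrom_lasso_eq hu hv hne).mono ?_ (hfin (u ++ₛ Stream'.cycle v hne))
    rintro n (hn : _ = s)
    rwa [Set.mem_ofPred_eq, hn]
  · intro hno x
    by_contra hinf
    exact hno (M.exists_reachable_cycle_of_infinite_runFrom_mem hinf)

end DFA

theorem prodAut_runFrom {α σ : Type*} (M : DFA α σ) (p q : σ) (s : σ × σ) (x : ℕ → α) (n : ℕ) :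
    (prodAut M p q).runFrom s x n = (M.runFrom s.1 x n, M.runFrom s.2 x n) := by
  induction n with
  | zero => rfl
  | succ n ih => simp only [DFA.runFrom, ih]; rfl

theorem almostEquiv_iff_prod_general {α σ : Type} [Fintype σ]
    (M : DFA α σ) (p q : σ) :
    (AlmostEquiv M M p q ↔
      ∀ x : ℕ → α, {n : ℕ | (prodAut M p q).runFrom (p, q) x n ∈ (prodAut M p q).accept}.Finite) ∧
    ((∀ x : ℕ → α, {n : ℕ | (prodAut M p q).runFrom (p, q) x n ∈ (prodAut M p q).accept}.Finite) ↔
      ¬ ∃ s ∈ (prodAut M p q).accept,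
        (∃ w : List α, (prodAut M p q).evalFrom (p, q) w = s) ∧
        (∃ w : List α, w ≠ [] ∧ (prodAut M p q).evalFrom s w = s)) := by
  refine ⟨forall_congr' fun x => ?_, (prodAut M p q).forall_finite_runFrom_mem_iff _ _⟩
  simp only [prodAut_runFrom]
  rfl

theorem almostEquiv_iff_prod {α σ : Type} [Fintype α] [Fintype σ]
    (M : DFA α σ) (p q : σ) :
    (AlmostEquiv M M p q ↔
      ∀ x : ℕ → α, {n : ℕ | (prodAut M p q).runFrom (p, q) x n ∈ (prodAut M p q).accept}.Finite) ∧
    ((∀ x : ℕ → α, {n : ℕ | (prodAut M p q).runFrom (p, q) x n ∈ (prodAut M p q).accept}.Finite) ↔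
      ¬ ∃ s ∈ (prodAut M p q).accept,
        (∃ w : List α, (prodAut M p q).evalFrom (p, q) w = s) ∧
        (∃ w : List α, w ≠ [] ∧ (prodAut M p q).evalFrom s w = s)) :=
  almostEquiv_iff_prod_general M p q
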